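/- arXiv:2605.18697 — 2 statements merged into one kernel-verified Lean document; each statement's English description precedes it below -/
import Mathlib

section
/- A permutation σ of {1,…,n} can be written as a product of adjacent transpositions each of which swaps two elements not related by a partial order ≤ if and only if σ preserves ≤, i.e., for all i, j with i ≤ j (and i ≠ j in the order of positions), σ places i before j. Equivalently: the linear extensions of a partial order on a sequence are exactly the sequences reachable by repeatedly swapping adjacent incomparable elements. -/
/-- One adjacent swap of two incomparable elements: the sequence represented
by the permutation `σ` (position `k` holds element `σ k`) has the elements at
positions `k` and `k+1` swapped, provided those two elements are incomparable
in the partial order `r`. -/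
def IncompStep {n : ℕ} (r : Fin n → Fin n → Prop)
    (σ τ : Equiv.Perm (Fin n)) : Prop :=
  ∃ (k : ℕ) (h1 : k < n) (h2 : k + 1 < n),
    ¬ r (σ ⟨k, h1⟩) (σ ⟨k + 1, h2⟩) ∧ ¬ r (σ ⟨k + 1, h2⟩) (σ ⟨k, h1⟩) ∧
    τ = σ * Equiv.swap ⟨k, h1⟩ ⟨k + 1, h2⟩

/-!
Each swap of adjacent incomparable elements keeps every related pair in order, and the identity
is a linear extension because `r` refines the position order. Conversely, a linear extension
`σ ≠ 1` has an adjacent descent; its two elements are incomparable (one way by refinement, the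
other because `σ` is a linear extension), and swapping them removes exactly one inversion of
`σ⁻¹`, so induction on the number of these inversions leads back to the identity.
-/

open Equiv Relation

lemma swap_apply_lt_swap_apply_iff {n : ℕ} {a b x y : Fin n} (hab : (b : ℕ) = a + 1)
    (hxy : ¬(x = a ∧ y = b)) (hyx : ¬(x = b ∧ y = a)) :
    swap a b x < swap a b y ↔ x < y := by
  simp only [swap_apply_def, Fin.lt_def, Fin.ext_iff] at *
  split_ifs <;> omega

namespace Equiv.Perm

variable {α : Type*} [LinearOrder α]

lemma eq_one_of_strictMono [WellFoundedLT α] {σ : Perm α} (h : StrictMono σ) : σ = 1 := by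
  have := Subsingleton.elim (h.orderIsoOfSurjective σ σ.surjective) (OrderIso.refl α)
  ext x
  exact congrArg (· x) (congrArg DFunLike.coe this)

lemma exists_adjacent_descent {n : ℕ} {σ : Perm (Fin n)} (h : σ ≠ 1) :
    ∃ (k : ℕ) (h1 : k < n) (h2 : k + 1 < n), σ ⟨k + 1, h2⟩ < σ ⟨k, h1⟩ := by
  by_contra! hasc
  cases n with
  | zero => exact h (Subsingleton.elim _ _)
  | succ m =>
    refine h (eq_one_of_strictMono (Fin.strictMono_iff_lt_succ.2 fun i ↦ ?_))
    exact (hasc i (by omega) (by simp)).lt_of_ne (σ.injective.ne Fin.castSucc_lt_succ.ne)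

def inversions [Fintype α] (π : Perm α) : Finset (α × α) :=
  {p | p.1 < p.2 ∧ π p.2 < π p.1}

@[simp]
lemma mem_inversions [Fintype α] {π : Perm α} {p : α × α} :
    p ∈ inversions π ↔ p.1 < p.2 ∧ π p.2 < π p.1 := by
  simp [inversions]

lemma inversions_symm_mul_swap_ssubset {n : ℕ} {σ : Perm (Fin n)} {a b : Fin n}
    (hab : (b : ℕ) = a + 1) (hdesc : σ b < σ a) :
    inversions (σ * swap a b).symm ⊂ inversions σ.symm := by
  have hsymm (x : Fin n) : (σ * swap a b).symm x = swap a b (σ.symm x) := rfl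
  have hab' : a < b := Fin.lt_def.2 (by omega)
  rw [Finset.ssubset_iff_of_subset]
  · refine ⟨(σ b, σ a), ?_, ?_⟩ <;> simp [hsymm, hdesc, hab', hab'.not_gt]
  · rintro ⟨i, j⟩ hp
    simp only [mem_inversions, hsymm] at hp
    refine mem_inversions.2 ⟨hp.1, (swap_apply_lt_swap_apply_iff hab ?_ ?_).1 hp.2⟩
    · rintro ⟨hj, hi⟩
      simp [hj, hi, hab'.not_gt] at hp
    · rintro ⟨hj, hi⟩
      rw [← hi, ← hj, apply_symm_apply, apply_symm_apply] at hdesc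
      exact hdesc.not_gt hp.1

end Equiv.Perm

variable {α : Type*}

def IsLinearExtension [LT α] (r : α → α → Prop) (σ : Perm α) : Prop :=
  ∀ i j, r i j → i ≠ j → σ.symm i < σ.symm j

lemma isLinearExtension_one [PartialOrder α] {r : α → α → Prop}
    (hrefine : ∀ i j, r i j → i ≤ j) : IsLinearExtension r (1 : Perm α) :=
  fun i j hr hij ↦ (hrefine i j hr).lt_of_ne hij

variable {n : ℕ} {r : Fin n → Fin n → Prop}

namespace IncompStep

variable {σ τ : Perm (Fin n)}

lemma symm (h : IncompStep r σ τ) : IncompStep r τ σ := by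
  obtain ⟨k, h1, h2, hlt, hgt, rfl⟩ := h
  refine ⟨k, h1, h2, ?_, ?_, ?_⟩
  · simpa [swap_apply_left, swap_apply_right] using hgt
  · simpa [swap_apply_left, swap_apply_right] using hlt
  · rw [mul_assoc, swap_mul_self, mul_one]

lemma isLinearExtension (h : IncompStep r σ τ) (hσ : IsLinearExtension r σ) :
    IsLinearExtension r τ := by
  obtain ⟨k, h1, h2, hlt, -, rfl⟩ := h
  intro i j hr hij
  refine (swap_apply_lt_swap_apply_iff rfl ?_ ?_).2 (hσ i j hr hij)
  · rintro ⟨hi, hj⟩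
    rw [← hi, ← hj, apply_symm_apply, apply_symm_apply] at hlt
    exact hlt hr
  · rintro ⟨hi, hj⟩
    have := hσ i j hr hij
    simp [hi, hj, Fin.lt_def] at this

end IncompStep

theorem IsLinearExtension.reflTransGen_incompStep {σ : Perm (Fin n)}
    (hrefine : ∀ i j, r i j → i ≤ j) (hσ : IsLinearExtension r σ) :
    ReflTransGen (IncompStep r) 1 σ := by
  by_cases hσ1 : σ = 1
  · rw [hσ1]
  obtain ⟨k, h1, h2, hdesc⟩ := Perm.exists_adjacent_descent hσ1
  have hstep : IncompStep r σ (σ * swap ⟨k, h1⟩ ⟨k + 1, h2⟩) := by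
    refine ⟨k, h1, h2, fun hr ↦ (hrefine _ _ hr).not_gt hdesc, fun hr ↦ ?_, rfl⟩
    have := hσ _ _ hr (σ.injective.ne (by simp [Fin.ext_iff]))
    simp [Fin.lt_def] at this
  exact ((hstep.isLinearExtension hσ).reflTransGen_incompStep hrefine).tail hstep.symm
termination_by (Perm.inversions σ.symm).card
decreasing_by exact Finset.card_lt_card (Perm.inversions_symm_mul_swap_ssubset rfl hdesc)

theorem reachable_by_incomparable_swaps_iff_order_preserving_general
    {n : ℕ} (r : Fin n → Fin n → Prop)
    (hrefine : ∀ i j : Fin n, r i j → i ≤ j)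
    (σ : Equiv.Perm (Fin n)) :
    Relation.ReflTransGen (IncompStep r) 1 σ ↔
      ∀ i j : Fin n, r i j → i ≠ j → σ.symm i < σ.symm j := by
  refine ⟨fun h ↦ ?_, fun hσ ↦ IsLinearExtension.reflTransGen_incompStep hrefine hσ⟩
  induction h with
  | refl => exact isLinearExtension_one hrefine
  | tail _ hstep ih => exact hstep.isLinearExtension ih

/-- for a partial order `r` on positions `{0,…,n-1}` refining the
position order, a permutation `σ` is reachable from the identity by adjacent
transpositions of `r`-incomparable elements iff `σ` preserves `r`, i.e. for
all `i ≠ j` with `r i j`, `σ` places `i` before `j`. (The linear extensions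
of the partial order are exactly the sequences reachable by repeatedly
swapping adjacent incomparable elements.) -/
theorem reachable_by_incomparable_swaps_iff_order_preserving
    {n : ℕ} (r : Fin n → Fin n → Prop) [IsPartialOrder (Fin n) r]
    (hrefine : ∀ i j : Fin n, r i j → i ≤ j)
    (σ : Equiv.Perm (Fin n)) :
    Relation.ReflTransGen (IncompStep r) 1 σ ↔
      ∀ i j : Fin n, r i j → i ≠ j → σ.symm i < σ.symm j :=
  reachable_by_incomparable_swaps_iff_order_preserving_general r hrefine σ
end

section
/- Single-assignment promotion is sound: consider a program over a store (a finite map from variable names to values) given as a straight-line sequence of instructions of the form 'store x e' and 'r := load x'. If a mutable variable x is stored exactly once, at position k with value v, then replacing every load of x occurring after position k with the constant v (and deleting the store) yields a program computing the same final values for all immutable result variables r. -/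
/-- Mutable variable names. -/
abbrev VName := String
/-- Immutable result variable names. -/
abbrev RName := String

/-- Straight-line instructions over values `V`:
`store x v` stores a value into mutable variable `x`;
`load r x` sets immutable result variable `r` to the contents of `x`;
`setr r v` sets immutable result variable `r` to the constant `v`. -/
inductive Instr (V : Type) where
  | store (x : VName) (v : V)
  | load (r : RName) (x : VName)
  | setr (r : RName) (v : V)

/-- Program states: a store `σ` and an immutable environment `ρ`. -/
abbrev PState (V : Type) := (VName → Option V) × (RName → Option V)

def stepInstr {V : Type} (st : PState V) : Instr V → PState V
  | .store x v => (Function.update st.1 x (some v), st.2)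
  | .load r x => (st.1, Function.update st.2 r (st.1 x))
  | .setr r v => (st.1, Function.update st.2 r (some v))

/-- Sequential execution of a straight-line program. -/
def run {V : Type} (P : List (Instr V)) (st : PState V) : PState V :=
  P.foldl stepInstr st

/-- Replace every load of `x` with assignment of the constant `v`. -/
def replLoad {V : Type} (x : VName) (v : V) : Instr V → Instr V
  | .load r y => if y = x then .setr r v else .load r y
  | i => i

lemma run_replLoad_aux {V : Type} (x : VName) (v : V) (P₂ : List (Instr V))
    (h₂ : ∀ i ∈ P₂, ∀ w : V, i ≠ .store x w)
    (σ₁ σ₂ : VName → Option V) (ρ : RName → Option V)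
    (hx : σ₁ x = some v) (hne : ∀ y, y ≠ x → σ₁ y = σ₂ y) :
    (run P₂ (σ₁, ρ)).2 = (run (P₂.map (replLoad x v)) (σ₂, ρ)).2 := by
  induction P₂ generalizing σ₁ σ₂ ρ with
  | nil => rfl
  | cons i P ih =>
    have hi := h₂ i (by simp)
    have hP : ∀ j ∈ P, ∀ w : V, j ≠ .store x w := fun j hj => h₂ j (by simp [hj])
    cases i with
    | store y w =>
      have hyx : y ≠ x := by rintro rfl; exact hi w rfl
      simp only [List.map_cons, run, List.foldl_cons, replLoad, stepInstr]
      refine ih hP _ _ _ (by simp [Function.update_of_ne hyx.symm, hx]) ?_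
      intro z hz
      by_cases hzy : z = y
      · subst hzy; simp
      · simp [Function.update_of_ne hzy, hne z hz]
    | load r y =>
      by_cases hyx : y = x
      · subst hyx
        simp only [List.map_cons, run, List.foldl_cons, replLoad, if_pos rfl, stepInstr, hx]
        exact ih hP _ _ _ hx hne
      · simp only [List.map_cons, run, List.foldl_cons, replLoad, if_neg hyx, stepInstr,
          hne y hyx]
        exact ih hP _ _ _ hx hne
    | setr r w =>
      simp only [List.map_cons, run, List.foldl_cons, replLoad, stepInstr]
      exact ih hP _ _ _ hx hne

/-- single-assignment promotion is sound. If `x` is stored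
exactly once, with value `v` (program `P₁ ++ store x v :: P₂`, where `P₁` and
`P₂` contain no store of `x` and `P₁` contains no load of `x`), then deleting
the store and replacing every subsequent load of `x` by the constant `v`
yields a program computing the same final values for all immutable result
variables. -/
theorem single_assignment_promotion_sound {V : Type} (x : VName) (v : V)
    (P₁ P₂ : List (Instr V))
    (h₁ : ∀ i ∈ P₁, (∀ w : V, i ≠ .store x w) ∧ (∀ r : RName, i ≠ .load r x))
    (h₂ : ∀ i ∈ P₂, ∀ w : V, i ≠ .store x w)
    (σ : VName → Option V) (ρ : RName → Option V) :
    (run (P₁ ++ Instr.store x v :: P₂) (σ, ρ)).2 =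
      (run (P₁ ++ P₂.map (replLoad x v)) (σ, ρ)).2 := by
  simp only [run, List.foldl_append, List.foldl_cons]
  set st := List.foldl stepInstr (σ, ρ) P₁ with hst
  show (run _ _).2 = (run _ _).2
  rw [(rfl : stepInstr st (Instr.store x v) = (Function.update st.1 x (some v), st.2)),
    (rfl : st = (st.1, st.2))]
  exact run_replLoad_aux x v P₂ h₂ _ _ _ (by simp)
    (fun y hy => Function.update_of_ne hy _ _)
end
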